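/- arXiv:1802.02017 — 7 statements merged into one kernel-verified Lean document; each statement's English description precedes it below -/
import Mathlib

section
/- Let G be a groupoid, U = {U_i}_{i∈I} an open cover of its object space G⁰ (for a discrete version: a family of subsets covering G⁰). Then the assignment φ²(i₁,i₂,g,h,j₁,j₂) = g h⁻¹ g, φ¹(i,g,j) = g, φ⁰(i,x) = x defines a strict homomorphism of 2-groupoids from the cover 2-groupoid G[U,2] to G (regarded as a 2-groupoid with only identity 2-morphisms), and this homomorphism is a weak equivalence. -/
/-- A groupoid presented by its sets of objects and arrows, with source and
target maps, units, a (partially meaningful) multiplication `mul g h`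
(intended for `s g = t h`, "first `h`, then `g`"), and inverses. -/
structure PGpd where
  O : Type
  A : Type
  s : A → O
  t : A → O
  e : O → A
  mul : A → A → A
  inv : A → A
  s_e : ∀ x, s (e x) = x
  t_e : ∀ x, t (e x) = x
  s_mul : ∀ g h, s g = t h → s (mul g h) = s h
  t_mul : ∀ g h, s g = t h → t (mul g h) = t g
  mul_assoc : ∀ g h k, s g = t h → s h = t k → mul (mul g h) k = mul g (mul h k)
  id_mul : ∀ g, mul (e (t g)) g = g
  mul_id : ∀ g, mul g (e (s g)) = g
  s_inv : ∀ g, s (inv g) = t g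
  t_inv : ∀ g, t (inv g) = s g
  mul_inv : ∀ g, mul g (inv g) = e (t g)
  inv_mul : ∀ g, mul (inv g) g = e (s g)

section Cover

variable (G : PGpd) (I : Type) (U : I → Set G.O)

/-- Objects of the cover 2-groupoid `G[U,2]`: pairs `(i, x)` with `x ∈ U i`. -/
def CovObj : Type := {p : I × G.O // p.2 ∈ U p.1}

/-- 1-morphisms of `G[U,2]`: triples `(i, g, j)` with `t g ∈ U i` and
`s g ∈ U j`. -/
def CovOne : Type :=
  {q : I × G.A × I // G.t q.2.1 ∈ U q.1 ∧ G.s q.2.1 ∈ U q.2.2}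

/-- 2-morphisms of `G[U,2]`: tuples `(i₁, i₂, g, h, j₁, j₂)` with `g, h`
parallel arrows of `G`, `t g = t h ∈ U i₁ ∩ U i₂` and `s g = s h ∈ U j₁ ∩ U j₂`. -/
def CovTwo : Type :=
  {r : (I × I) × (G.A × G.A) × (I × I) //
    G.t r.2.1.1 = G.t r.2.1.2 ∧ G.s r.2.1.1 = G.s r.2.1.2 ∧
    G.t r.2.1.1 ∈ U r.1.1 ∧ G.t r.2.1.2 ∈ U r.1.2 ∧
    G.s r.2.1.1 ∈ U r.2.2.1 ∧ G.s r.2.1.2 ∈ U r.2.2.2}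

/-- Source of a 1-morphism `(i, g, j)`, namely `(j, s g)`. -/
def src1 (q : CovOne G I U) : CovObj G I U := ⟨(q.1.2.2, G.s q.1.2.1), q.2.2⟩

/-- Target of a 1-morphism `(i, g, j)`, namely `(i, t g)`. -/
def tgt1 (q : CovOne G I U) : CovObj G I U := ⟨(q.1.1, G.t q.1.2.1), q.2.1⟩

/-- Source 2-level map: `s₂(i₁, i₂, g, h, j₁, j₂) = (i₁, g, j₁)`. -/
def s2c (r : CovTwo G I U) : CovOne G I U :=
  ⟨(r.1.1.1, r.1.2.1.1, r.1.2.2.1), r.2.2.2.1, r.2.2.2.2.2.1⟩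

/-- Target 2-level map: `t₂(i₁, i₂, g, h, j₁, j₂) = (i₂, h, j₂)`. -/
def t2c (r : CovTwo G I U) : CovOne G I U :=
  ⟨(r.1.1.2, r.1.2.1.2, r.1.2.2.2), r.2.2.2.2.1, r.2.2.2.2.2.2⟩

/-- Composition of 1-morphisms: `(i,g,j)(j',h,k) = (i, g·h, k)`
(given composability of the underlying arrows). -/
def comp1c (q q' : CovOne G I U) (hc : G.s q.1.2.1 = G.t q'.1.2.1) :
    CovOne G I U :=
  ⟨(q.1.1, G.mul q.1.2.1 q'.1.2.1, q'.1.2.2), by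
      constructor
      · rw [G.t_mul _ _ hc]; exact q.2.1
      · rw [G.s_mul _ _ hc]; exact q'.2.2⟩

/-- The unit 1-morphism at the object `(i, x)`. -/
def unit1c (p : CovObj G I U) : CovOne G I U :=
  ⟨(p.1.1, G.e p.1.2, p.1.1), by
      constructor
      · rw [G.t_e]; exact p.2
      · rw [G.s_e]; exact p.2⟩

/-- The identity 2-morphism on a 1-morphism `(i, g, j)`. -/
def diag2c (q : CovOne G I U) : CovTwo G I U :=
  ⟨((q.1.1, q.1.1), (q.1.2.1, q.1.2.1), (q.1.2.2, q.1.2.2)),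
    rfl, rfl, q.2.1, q.2.1, q.2.2, q.2.2⟩

/-- The canonical map on objects: `(i, x) ↦ x`. -/
def φ0 (p : CovObj G I U) : G.O := p.1.2

/-- The canonical map on 1-morphisms: `(i, g, j) ↦ g`. -/
def φ1 (q : CovOne G I U) : G.A := q.1.2.1

/-- The canonical map on 2-morphisms: `(i₁, i₂, g, h, j₁, j₂) ↦ g·h⁻¹·g`. -/
def φ2 (r : CovTwo G I U) : G.A :=
  G.mul (G.mul r.1.2.1.1 (G.inv r.1.2.1.2)) r.1.2.1.1

end Cover

/-- For a groupoid `G` and a cover `U = {U i}` of its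
object space, the canonical maps `φ⁰(i,x) = x`, `φ¹(i,g,j) = g`,
`φ²(i₁,i₂,g,h,j₁,j₂) = g·h⁻¹·g` from the cover 2-groupoid `G[U,2]` to `G`
(viewed as a 2-groupoid with only identity 2-morphisms) define a strict
homomorphism of 2-groupoids, and this homomorphism is a weak equivalence:
it is compatible with sources, targets, units and composition of
1-morphisms, sends identity 2-morphisms to identity 2-morphisms, and
satisfies the conditions (WE1), (WE2), (WE3). -/
theorem cover_two_groupoid_weak_equivalence
    (G : PGpd) (I : Type) (U : I → Set G.O) (hU : ∀ x : G.O, ∃ i, x ∈ U i) :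
    -- strict homomorphism: compatibility with source, target, units,
    -- composition of 1-morphisms, and identity 2-morphisms
    (∀ q : CovOne G I U, φ0 G I U (src1 G I U q) = G.s (φ1 G I U q)) ∧
    (∀ q : CovOne G I U, φ0 G I U (tgt1 G I U q) = G.t (φ1 G I U q)) ∧
    (∀ p : CovObj G I U, φ1 G I U (unit1c G I U p) = G.e (φ0 G I U p)) ∧
    (∀ (q q' : CovOne G I U) (hc : G.s q.1.2.1 = G.t q'.1.2.1),
        φ1 G I U (comp1c G I U q q' hc) = G.mul (φ1 G I U q) (φ1 G I U q')) ∧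
    (∀ q : CovOne G I U, φ2 G I U (diag2c G I U q) = φ1 G I U q) ∧
    -- (WE1): essential surjectivity on objects
    (∀ y : G.O, ∃ (p : CovObj G I U) (γ : G.A),
        G.t γ = φ0 G I U p ∧ G.s γ = y) ∧
    -- (WE2): fullness on 1-arrows up to 2-isomorphism
    (∀ (a b : CovObj G I U) (γ : G.A),
        G.t γ = φ0 G I U a → G.s γ = φ0 G I U b →
        ∃ q : CovOne G I U, tgt1 G I U q = a ∧ src1 G I U q = b ∧
          φ1 G I U q = γ) ∧
    -- (WE3): bijectivity at the level of 2-arrows: a 2-morphism of the cover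
    -- 2-groupoid is uniquely determined by its source and target 1-morphisms,
    -- and every pair of 1-morphisms with the same underlying endpoints arises
    Function.Bijective
      (fun r : CovTwo G I U =>
        (⟨(s2c G I U r, t2c G I U r), r.2.2.1, r.2.1⟩ :
          {qq : CovOne G I U × CovOne G I U //
            G.s (φ1 G I U qq.1) = G.s (φ1 G I U qq.2) ∧
            G.t (φ1 G I U qq.1) = G.t (φ1 G I U qq.2)})) := by
  refine ⟨fun q => rfl, fun q => rfl, fun p => rfl, fun q q' hc => rfl,
    ?_, ?_, ?_, ?_, ?_⟩
  · intro q
    show G.mul (G.mul q.1.2.1 (G.inv q.1.2.1)) q.1.2.1 = q.1.2.1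
    rw [G.mul_inv, G.id_mul]
  · intro y
    obtain ⟨i, hi⟩ := hU y
    exact ⟨⟨(i, y), hi⟩, G.e y, G.t_e y, G.s_e y⟩
  · intro a b γ ht hs
    refine ⟨⟨(a.1.1, γ, b.1.1), ?_, ?_⟩, ?_, ?_, rfl⟩
    · rw [ht]; exact a.2
    · rw [hs]; exact b.2
    · show (⟨(a.1.1, G.t γ), _⟩ : CovObj G I U) = a
      cases a with
      | mk p hp => cases p; simp only [tgt1]; congr 1; rw [ht]; rfl
    · show (⟨(b.1.1, G.s γ), _⟩ : CovObj G I U) = b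
      cases b with
      | mk p hp => cases p; simp only [src1]; congr 1; rw [hs]; rfl
  · rintro ⟨⟨⟨i1, i2⟩, ⟨g, h⟩, ⟨j1, j2⟩⟩, hr⟩ ⟨⟨⟨i1', i2'⟩, ⟨g', h'⟩, ⟨j1', j2'⟩⟩, hr'⟩ heq
    have e1 := congrArg (fun x : {qq : CovOne G I U × CovOne G I U //
            G.s (φ1 G I U qq.1) = G.s (φ1 G I U qq.2) ∧
            G.t (φ1 G I U qq.1) = G.t (φ1 G I U qq.2)} => x.val.1.val) heq
    have e2 := congrArg (fun x : {qq : CovOne G I U × CovOne G I U //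
            G.s (φ1 G I U qq.1) = G.s (φ1 G I U qq.2) ∧
            G.t (φ1 G I U qq.1) = G.t (φ1 G I U qq.2)} => x.val.2.val) heq
    simp only [s2c, t2c, Prod.mk.injEq] at e1 e2
    obtain ⟨a1, a2, a3⟩ := e1
    obtain ⟨b1, b2, b3⟩ := e2
    subst a1; subst a2; subst a3; subst b1; subst b2; subst b3; rfl
  · rintro ⟨⟨⟨⟨i1, g, j1⟩, hq⟩, ⟨⟨i2, h, j2⟩, hq'⟩⟩, hs, ht⟩
    exact ⟨⟨((i1, i2), (g, h), (j1, j2)),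
      ht, hs, hq.1, hq'.1, hq.2, hq'.2⟩, rfl⟩
end

section
/- Let (M, α₁, α₂, β₁, β₂) be a crossing between crossed modules 𝔊₁ = (H₁ → G₁) and 𝔊₂ = (H₂ → G₂) over the same object space (so α₁: H₁ → M, β₁: H₂ → M, α₂: M → G₁, β₂: M → G₂ with α₂∘α₁ = ∂₁, β₂∘β₁ = ∂₂, the diagonals are complexes, and the conjugation identities hold). Then the images of α₁ and β₁ commute in M: α₁(h₁)β₁(h₂) = β₁(h₂)α₁(h₁) whenever s(h₁) = s(h₂). -/
/-- A groupoid with object space `X`.  Composition is written in "paper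
order": `comp g h` is defined when the source of `g` equals the target of
`h`; here `Hom x y` is the set of arrows with source `x` and target `y`, so
for `g : Hom y z` and `h : Hom x y` we have `comp g h : Hom x z`
("first `h`, then `g`"). -/
structure GpdOver (X : Type) where
  Hom : X → X → Type
  id : ∀ x, Hom x x
  comp : ∀ {x y z : X}, Hom y z → Hom x y → Hom x z
  inv : ∀ {x y : X}, Hom x y → Hom y x
  comp_assoc : ∀ {x y z w : X} (g : Hom z w) (h : Hom y z) (k : Hom x y),
    comp (comp g h) k = comp g (comp h k)
  id_comp : ∀ {x y : X} (g : Hom x y), comp (id y) g = g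
  comp_id : ∀ {x y : X} (g : Hom x y), comp g (id x) = g
  comp_inv : ∀ {x y : X} (g : Hom x y), comp g (inv g) = id y
  inv_comp : ∀ {x y : X} (g : Hom x y), comp (inv g) g = id x

/-- A crossed module of groupoids over the object space `X`: a groupoid `G`
over `X`, a bundle of groups `H` over `X`, a morphism `δ : H → G` over the
identity of `X` (landing in loops), and an action `act` of `G` on `H` by
group isomorphisms (`act g : H y → H x` for `g : Hom x y`), satisfying
`δ (act g a) = g⁻¹ · δ a · g` and `act (δ a) b = a⁻¹ b a`. -/
structure XMod (X : Type) where
  G : GpdOver X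
  H : X → Type
  mul : ∀ {x : X}, H x → H x → H x
  one : ∀ x : X, H x
  hinv : ∀ {x : X}, H x → H x
  mul_assoc : ∀ {x : X} (a b c : H x), mul (mul a b) c = mul a (mul b c)
  one_mul : ∀ {x : X} (a : H x), mul (one x) a = a
  mul_one : ∀ {x : X} (a : H x), mul a (one x) = a
  inv_mul : ∀ {x : X} (a : H x), mul (hinv a) a = one x
  mul_inv : ∀ {x : X} (a : H x), mul a (hinv a) = one x
  δ : ∀ {x : X}, H x → G.Hom x x
  δ_mul : ∀ {x : X} (a b : H x), δ (mul a b) = G.comp (δ a) (δ b)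
  δ_one : ∀ x : X, δ (one x) = G.id x
  act : ∀ {x y : X}, G.Hom x y → H y → H x
  act_id : ∀ {x : X} (a : H x), act (G.id x) a = a
  act_comp : ∀ {x y z : X} (g : G.Hom y z) (h : G.Hom x y) (a : H z),
    act (G.comp g h) a = act h (act g a)
  act_mul : ∀ {x y : X} (g : G.Hom x y) (a b : H y),
    act g (mul a b) = mul (act g a) (act g b)
  act_one : ∀ {x y : X} (g : G.Hom x y), act g (one y) = one x
  δ_act : ∀ {x y : X} (g : G.Hom x y) (a : H y),
    δ (act g a) = G.comp (G.inv g) (G.comp (δ a) g)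
  act_δ : ∀ {x : X} (a b : H x), act (δ a) b = mul (hinv a) (mul b a)

/-- A strict morphism of groupoids over the same object space `X`. -/
structure GpdHom {X : Type} (M N : GpdOver X) where
  map : ∀ {x y : X}, M.Hom x y → N.Hom x y
  map_comp : ∀ {x y z : X} (g : M.Hom y z) (h : M.Hom x y),
    map (M.comp g h) = N.comp (map g) (map h)
  map_id : ∀ x : X, map (M.id x) = N.id x
  map_inv : ∀ {x y : X} (g : M.Hom x y), map (M.inv g) = N.inv (map g)

/-- A strict morphism of crossed modules of groupoids over the same object
space `X`. -/
structure XModHom {X : Type} (A B : XMod X) where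
  mapH : ∀ {x : X}, A.H x → B.H x
  mapG : ∀ {x y : X}, A.G.Hom x y → B.G.Hom x y
  mapH_mul : ∀ {x : X} (a b : A.H x), mapH (A.mul a b) = B.mul (mapH a) (mapH b)
  mapG_comp : ∀ {x y z : X} (g : A.G.Hom y z) (h : A.G.Hom x y),
    mapG (A.G.comp g h) = B.G.comp (mapG g) (mapG h)
  mapG_id : ∀ x : X, mapG (A.G.id x) = B.G.id x
  comm : ∀ {x : X} (a : A.H x), B.δ (mapH a) = mapG (A.δ a)
  equivar : ∀ {x y : X} (g : A.G.Hom x y) (a : A.H y),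
    mapH (A.act g a) = B.act (mapG g) (mapH a)

/-- A crossing from the crossed module `A` to the crossed module `B`
(both over the same object space `X`, with trivial anchor maps):
a groupoid `M` over `X` together with morphisms `α₁ : H₁ → M`,
`α₂ : M → G₁`, `β₁ : H₂ → M`, `β₂ : M → G₂` (all the identity on objects),
such that `α₂∘α₁ = ∂₁`, `β₂∘β₁ = ∂₂`, the diagonals are complexes,
`H₂ → M → G₁` is an extension of groupoids, and the conjugation identities
hold. -/
structure Crossing {X : Type} (A B : XMod X) where
  M : GpdOver X
  α₁ : ∀ {x : X}, A.H x → M.Hom x x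
  α₂ : GpdHom M A.G
  β₁ : ∀ {x : X}, B.H x → M.Hom x x
  β₂ : GpdHom M B.G
  α₁_mul : ∀ {x : X} (a b : A.H x), α₁ (A.mul a b) = M.comp (α₁ a) (α₁ b)
  β₁_mul : ∀ {x : X} (a b : B.H x), β₁ (B.mul a b) = M.comp (β₁ a) (β₁ b)
  tri₁ : ∀ {x : X} (a : A.H x), α₂.map (α₁ a) = A.δ a
  tri₂ : ∀ {x : X} (b : B.H x), β₂.map (β₁ b) = B.δ b
  diag₁ : ∀ {x : X} (a : A.H x), β₂.map (α₁ a) = B.G.id x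
  diag₂ : ∀ {x : X} (b : B.H x), α₂.map (β₁ b) = A.G.id x
  β₁_inj : ∀ {x : X} (b b' : B.H x), β₁ b = β₁ b' → b = b'
  α₂_surj : ∀ {x y : X} (g : A.G.Hom x y), ∃ m : M.Hom x y, α₂.map m = g
  exact₁ : ∀ {x : X} (m : M.Hom x x), α₂.map m = A.G.id x → ∃ b : B.H x, β₁ b = m
  conj₁ : ∀ {x y : X} (m : M.Hom x y) (a : A.H y),
    α₁ (A.act (α₂.map m) a) = M.comp (M.inv m) (M.comp (α₁ a) m)
  conj₂ : ∀ {x y : X} (m : M.Hom x y) (b : B.H y),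
    β₁ (B.act (β₂.map m) b) = M.comp (M.inv m) (M.comp (β₁ b) m)

/-- A crossed extension of `A` and `B`: a crossing for which the other
diagonal `H₁ → M → G₂` is also an extension of groupoids. -/
structure CrossedExt {X : Type} (A B : XMod X) extends Crossing A B where
  α₁_inj : ∀ {x : X} (a a' : A.H x), α₁ a = α₁ a' → a = a'
  β₂_surj : ∀ {x y : X} (g : B.G.Hom x y), ∃ m : M.Hom x y, β₂.map m = g
  exact₂ : ∀ {x : X} (m : M.Hom x x), β₂.map m = B.G.id x → ∃ a : A.H x, α₁ a = m

/-- Let `(M, α₁, α₂, β₁, β₂)` be a crossing between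
crossed modules `𝔊₁ = (H₁ → G₁)` and `𝔊₂ = (H₂ → G₂)` over the same object
space.  Then the images of `α₁` and `β₁` commute in `M`:
`α₁(h₁)·β₁(h₂) = β₁(h₂)·α₁(h₁)` whenever `s h₁ = s h₂`. -/
theorem crossing_images_commute {X : Type} (A B : XMod X) (C : Crossing A B)
    {x : X} (a : A.H x) (b : B.H x) :
    C.M.comp (C.α₁ a) (C.β₁ b) = C.M.comp (C.β₁ b) (C.α₁ a) := by
  have h := C.conj₁ (C.β₁ b) a
  rw [C.diag₂, A.act_id] at h
  conv_rhs => rw [h]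
  rw [← C.M.comp_assoc, C.M.comp_inv, C.M.id_comp]
end

section
/- Let χ = (χˡ, χʳ): 𝔊₁ → 𝔊₂ be a strict morphism of crossed modules of groupoids with common object space X. Define M = H₂ ⋊_χ G₁, α₁(h₁) = (χˡ(h₁⁻¹), ∂₁(h₁)), α₂(h₂, g₁) = g₁, β₁(h₂) = (h₂, s(h₂)), β₂(h₂, g₁) = ∂₂(h₂)χʳ(g₁). Then (M, α₁, α₂, β₁, β₂) is a crossing from 𝔊₁ to 𝔊₂: the diagram commutes (α₂∘α₁ = ∂₁, β₂∘β₁ = ∂₂), the diagonals are complexes, the sequence H₂ —β₁→ M —α₂→ G₁ is a groupoid extension (β₁ injective with image the kernel of α₂, and α₂ surjective), and the conjugation identities α₁(c_{α₂(m)}(h₁)) = m⁻¹α₁(h₁)m and β₁(c_{β₂(m)}(h₂)) = m⁻¹β₁(h₂)m hold. -/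
section SdpCrossing

variable {X : Type} (A B : XMod X) (χ : XModHom A B)

/-- Arrows of the semidirect product groupoid `M = H₂ ⋊_χ G₁`. -/
def MHom (x y : X) : Type := B.H y × A.G.Hom x y

/-- Composition of `H₂ ⋊_χ G₁`: `(h,g)·(k,f) = (h·c_{χ(g)⁻¹}(k), g·f)`. -/
def mComp {x y z : X} (c : MHom A B y z) (d : MHom A B x y) : MHom A B x z :=
  (B.mul c.1 (B.act (B.G.inv (χ.mapG c.2)) d.1), A.G.comp c.2 d.2)

/-- Identity of `H₂ ⋊_χ G₁` at `x`. -/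
def mId (x : X) : MHom A B x x := (B.one x, A.G.id x)

/-- Inverse of `H₂ ⋊_χ G₁`: `(h,g)⁻¹ = ((c_{χ(g)}(h))⁻¹, g⁻¹)`. -/
def mInv {x y : X} (c : MHom A B x y) : MHom A B y x :=
  (B.hinv (B.act (χ.mapG c.2) c.1), A.G.inv c.2)

/-- `α₁(h₁) = (χ(h₁⁻¹), ∂₁ h₁)`. -/
def mα₁ {x : X} (a : A.H x) : MHom A B x x := (χ.mapH (A.hinv a), A.δ a)

/-- `α₂(h₂, g₁) = g₁`. -/
def mα₂ {x y : X} (c : MHom A B x y) : A.G.Hom x y := c.2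

/-- `β₁(h₂) = (h₂, s h₂)`. -/
def mβ₁ {x : X} (b : B.H x) : MHom A B x x := (b, A.G.id x)

/-- `β₂(h₂, g₁) = ∂₂(h₂)·χ(g₁)`. -/
def mβ₂ {x y : X} (c : MHom A B x y) : B.G.Hom x y :=
  B.G.comp (B.δ c.1) (χ.mapG c.2)

end SdpCrossing

section Aux

variable {X : Type}

namespace GpdOver

variable (G : GpdOver X)

lemma inv_id (x : X) : G.inv (G.id x) = G.id x := by
  have h := G.comp_inv (G.id x)
  rwa [G.id_comp] at h

lemma cancel_left {x y z : X} (g : G.Hom y z) (k : G.Hom x y) :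
    G.comp (G.inv g) (G.comp g k) = k := by
  rw [← G.comp_assoc, G.inv_comp, G.id_comp]

lemma cancel_left' {x y z : X} (g : G.Hom z y) (k : G.Hom x y) :
    G.comp g (G.comp (G.inv g) k) = k := by
  rw [← G.comp_assoc, G.comp_inv, G.id_comp]

lemma inv_inv {x y : X} (g : G.Hom x y) : G.inv (G.inv g) = g := by
  have h := G.cancel_left (G.inv g) g
  rwa [G.inv_comp, G.comp_id] at h

lemma inv_comp_rev {x y z : X} (g : G.Hom y z) (h : G.Hom x y) :
    G.inv (G.comp g h) = G.comp (G.inv h) (G.inv g) := by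
  have key : G.comp (G.comp g h) (G.comp (G.inv h) (G.inv g)) = G.id z := by
    rw [G.comp_assoc, G.cancel_left', G.comp_inv]
  have h2 := congrArg (fun k => G.comp (G.inv (G.comp g h)) k) key
  rw [← G.comp_assoc, G.inv_comp, G.id_comp, G.comp_id] at h2
  exact h2.symm

end GpdOver

namespace XMod

variable (B : XMod X)

lemma mul_cancel_left {x : X} (a k : B.H x) :
    B.mul (B.hinv a) (B.mul a k) = k := by
  rw [← B.mul_assoc, B.inv_mul, B.one_mul]

lemma mul_cancel_left' {x : X} (a k : B.H x) :
    B.mul a (B.mul (B.hinv a) k) = k := by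
  rw [← B.mul_assoc, B.mul_inv, B.one_mul]

lemma hinv_hinv {x : X} (a : B.H x) : B.hinv (B.hinv a) = a := by
  have h := B.mul_cancel_left (B.hinv a) a
  rwa [B.inv_mul, B.mul_one] at h

lemma hinv_mul_rev {x : X} (a b : B.H x) :
    B.hinv (B.mul a b) = B.mul (B.hinv b) (B.hinv a) := by
  have key : B.mul (B.mul a b) (B.mul (B.hinv b) (B.hinv a)) = B.one x := by
    rw [B.mul_assoc, B.mul_cancel_left', B.mul_inv]
  have h2 := congrArg (fun k => B.mul (B.hinv (B.mul a b)) k) key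
  rw [← B.mul_assoc, B.inv_mul, B.one_mul, B.mul_one] at h2
  exact h2.symm

lemma act_hinv {x y : X} (g : B.G.Hom x y) (a : B.H y) :
    B.act g (B.hinv a) = B.hinv (B.act g a) := by
  have key : B.mul (B.act g a) (B.act g (B.hinv a)) = B.one x := by
    rw [← B.act_mul, B.mul_inv, B.act_one]
  have h2 := congrArg (fun k => B.mul (B.hinv (B.act g a)) k) key
  rwa [← B.mul_assoc, B.inv_mul, B.one_mul, B.mul_one] at h2

lemma act_inv_act {x y : X} (g : B.G.Hom x y) (a : B.H y) :
    B.act (B.G.inv g) (B.act g a) = a := by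
  rw [← B.act_comp, B.G.comp_inv, B.act_id]

lemma act_act_inv {x y : X} (g : B.G.Hom x y) (a : B.H x) :
    B.act g (B.act (B.G.inv g) a) = a := by
  rw [← B.act_comp, B.G.inv_comp, B.act_id]

lemma δ_hinv {x : X} (a : B.H x) : B.δ (B.hinv a) = B.G.inv (B.δ a) := by
  have key : B.G.comp (B.δ a) (B.δ (B.hinv a)) = B.G.id x := by
    rw [← B.δ_mul, B.mul_inv, B.δ_one]
  have h2 := congrArg (fun k => B.G.comp (B.G.inv (B.δ a)) k) key
  rwa [← B.G.comp_assoc, B.G.inv_comp, B.G.id_comp, B.G.comp_id] at h2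

lemma act_inv_δ {x : X} (a b : B.H x) :
    B.act (B.G.inv (B.δ a)) b = B.mul a (B.mul b (B.hinv a)) := by
  rw [← B.δ_hinv, B.act_δ, B.hinv_hinv]

end XMod

namespace XModHom

variable {A B : XMod X} (χ : XModHom A B)

lemma mapG_inv {x y : X} (g : A.G.Hom x y) :
    χ.mapG (A.G.inv g) = B.G.inv (χ.mapG g) := by
  have key : B.G.comp (χ.mapG g) (χ.mapG (A.G.inv g)) = B.G.id y := by
    rw [← χ.mapG_comp, A.G.comp_inv, χ.mapG_id]
  have h2 := congrArg (fun k => B.G.comp (B.G.inv (χ.mapG g)) k) key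
  rwa [← B.G.comp_assoc, B.G.inv_comp, B.G.id_comp, B.G.comp_id] at h2

lemma mapH_one (x : X) : χ.mapH (A.one x) = B.one x := by
  have h : χ.mapH (A.one x) = B.mul (χ.mapH (A.one x)) (χ.mapH (A.one x)) := by
    rw [← χ.mapH_mul, A.one_mul]
  have h2 := congrArg (fun k => B.mul (B.hinv (χ.mapH (A.one x))) k) h.symm
  rwa [← B.mul_assoc, B.inv_mul, B.one_mul] at h2

lemma mapH_hinv {x : X} (a : A.H x) :
    χ.mapH (A.hinv a) = B.hinv (χ.mapH a) := by
  have key : B.mul (χ.mapH a) (χ.mapH (A.hinv a)) = B.one x := by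
    rw [← χ.mapH_mul, A.mul_inv, χ.mapH_one]
  have h2 := congrArg (fun k => B.mul (B.hinv (χ.mapH a)) k) key
  rwa [← B.mul_assoc, B.inv_mul, B.one_mul, B.mul_one] at h2

end XModHom

end Aux

/-- Let `χ : 𝔊₁ → 𝔊₂` be a strict morphism of crossed
modules of groupoids over a common object space `X`.  Then the semidirect
product `M = H₂ ⋊_χ G₁` together with `α₁(h₁) = (χ(h₁⁻¹), ∂₁ h₁)`,
`α₂(h₂,g₁) = g₁`, `β₁(h₂) = (h₂, s h₂)`, `β₂(h₂,g₁) = ∂₂(h₂)·χ(g₁)`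
is a crossing from `𝔊₁` to `𝔊₂`: `M` is a groupoid, the diagram commutes,
the diagonals are complexes, `H₂ —β₁→ M —α₂→ G₁` is a groupoid extension,
and the conjugation identities hold. -/
theorem strict_morphism_semidirect_crossing {X : Type} (A B : XMod X)
    (χ : XModHom A B) :
    -- `M` is a groupoid over `X`
    (∀ {x y z w : X} (c : MHom A B z w) (d : MHom A B y z) (e : MHom A B x y),
        mComp A B χ (mComp A B χ c d) e = mComp A B χ c (mComp A B χ d e)) ∧
    (∀ {x y : X} (c : MHom A B x y), mComp A B χ (mId A B y) c = c) ∧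
    (∀ {x y : X} (c : MHom A B x y), mComp A B χ c (mId A B x) = c) ∧
    (∀ {x y : X} (c : MHom A B x y), mComp A B χ c (mInv A B χ c) = mId A B y) ∧
    (∀ {x y : X} (c : MHom A B x y), mComp A B χ (mInv A B χ c) c = mId A B x) ∧
    -- `α₁, β₁` are morphisms of group bundles
    (∀ {x : X} (a a' : A.H x),
        mα₁ A B χ (A.mul a a') = mComp A B χ (mα₁ A B χ a) (mα₁ A B χ a')) ∧
    (∀ {x : X} (b b' : B.H x),
        mβ₁ A B (B.mul b b') = mComp A B χ (mβ₁ A B b) (mβ₁ A B b')) ∧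
    -- `α₂, β₂` are morphisms of groupoids
    (∀ {x y z : X} (c : MHom A B y z) (d : MHom A B x y),
        mα₂ A B (mComp A B χ c d) = A.G.comp (mα₂ A B c) (mα₂ A B d)) ∧
    (∀ {x y z : X} (c : MHom A B y z) (d : MHom A B x y),
        mβ₂ A B χ (mComp A B χ c d) = B.G.comp (mβ₂ A B χ c) (mβ₂ A B χ d)) ∧
    -- commutativity of the diagram: α₂∘α₁ = ∂₁ and β₂∘β₁ = ∂₂
    (∀ {x : X} (a : A.H x), mα₂ A B (mα₁ A B χ a) = A.δ a) ∧
    (∀ {x : X} (b : B.H x), mβ₂ A B χ (mβ₁ A B b) = B.δ b) ∧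
    -- the diagonals are complexes
    (∀ {x : X} (a : A.H x), mβ₂ A B χ (mα₁ A B χ a) = B.G.id x) ∧
    (∀ {x : X} (b : B.H x), mα₂ A B (mβ₁ A B b) = A.G.id x) ∧
    -- `H₂ —β₁→ M —α₂→ G₁` is a groupoid extension
    (∀ {x : X} (b b' : B.H x), mβ₁ A B b = mβ₁ A B b' → b = b') ∧
    (∀ {x y : X} (g : A.G.Hom x y), ∃ c : MHom A B x y, mα₂ A B c = g) ∧
    (∀ {x : X} (c : MHom A B x x), mα₂ A B c = A.G.id x →
        ∃ b : B.H x, mβ₁ A B b = c) ∧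
    -- conjugation identities
    (∀ {x y : X} (c : MHom A B x y) (a : A.H y),
        mα₁ A B χ (A.act (mα₂ A B c) a)
          = mComp A B χ (mInv A B χ c) (mComp A B χ (mα₁ A B χ a) c)) ∧
    (∀ {x y : X} (c : MHom A B x y) (b : B.H y),
        mβ₁ A B (B.act (mβ₂ A B χ c) b)
          = mComp A B χ (mInv A B χ c) (mComp A B χ (mβ₁ A B b) c)) := by
  refine ⟨?_, ?_, ?_, ?_, ?_, ?_, ?_, ?_, ?_, ?_, ?_, ?_, ?_, ?_, ?_, ?_, ?_, ?_⟩
  · -- associativity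
    intro x y z w c d e
    refine Prod.ext ?_ (A.G.comp_assoc _ _ _)
    dsimp only [mComp]
    rw [χ.mapG_comp, B.G.inv_comp_rev, B.act_comp, B.mul_assoc, ← B.act_mul]
  · -- left identity
    intro x y c
    refine Prod.ext ?_ ?_
    · show B.mul (B.one y) (B.act (B.G.inv (χ.mapG (A.G.id y))) c.1) = c.1
      rw [χ.mapG_id, B.G.inv_id, B.act_id, B.one_mul]
    · exact A.G.id_comp c.2
  · -- right identity
    intro x y c
    refine Prod.ext ?_ ?_
    · show B.mul c.1 (B.act (B.G.inv (χ.mapG c.2)) (B.one x)) = c.1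
      rw [B.act_one, B.mul_one]
    · exact A.G.comp_id c.2
  · -- comp inv
    intro x y c
    refine Prod.ext ?_ (A.G.comp_inv c.2)
    dsimp only [mComp, mInv, mId]
    rw [B.act_hinv, B.act_inv_act, B.mul_inv]
  · -- inv comp
    intro x y c
    refine Prod.ext ?_ (A.G.inv_comp c.2)
    dsimp only [mComp, mInv, mId]
    rw [χ.mapG_inv, B.G.inv_inv, B.inv_mul]
  · -- α₁ is multiplicative
    intro x a a'
    refine Prod.ext ?_ (A.δ_mul a a')
    dsimp only [mα₁, mComp]
    rw [← χ.comm, B.act_inv_δ]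
    simp only [χ.mapH_hinv, χ.mapH_mul, B.hinv_mul_rev]
    rw [B.mul_cancel_left]
  · -- β₁ is multiplicative
    intro x b b'
    refine Prod.ext ?_ (A.G.id_comp _).symm
    dsimp only [mβ₁, mComp]
    rw [χ.mapG_id, B.G.inv_id, B.act_id]
  · -- α₂ is a morphism
    intro x y z c d
    rfl
  · -- β₂ is a morphism
    intro x y z c d
    simp only [mβ₂, mComp]
    rw [B.δ_mul, B.δ_act, B.G.inv_inv, χ.mapG_comp]
    simp only [B.G.comp_assoc]
    rw [B.G.cancel_left]
  · -- α₂ ∘ α₁ = δ₁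
    intro x a
    rfl
  · -- β₂ ∘ β₁ = δ₂
    intro x b
    simp only [mβ₂, mβ₁]
    rw [χ.mapG_id, B.G.comp_id]
  · -- first diagonal is a complex
    intro x a
    simp only [mβ₂, mα₁]
    rw [χ.comm, ← χ.mapG_comp, ← A.δ_mul, A.inv_mul, A.δ_one, χ.mapG_id]
  · -- second diagonal is a complex
    intro x b
    rfl
  · -- β₁ injective
    intro x b b' h
    exact congrArg Prod.fst h
  · -- α₂ surjective
    intro x y g
    exact ⟨(B.one y, g), rfl⟩
  · -- exactness
    intro x c h
    exact ⟨c.1, Prod.ext rfl h.symm⟩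
  · -- first conjugation identity
    intro x y c a
    refine Prod.ext ?_ (A.δ_act c.2 a)
    dsimp only [mα₁, mα₂, mComp, mInv]
    rw [← χ.comm, B.act_inv_δ, χ.mapG_inv, B.G.inv_inv]
    simp only [χ.mapH_hinv, B.mul_cancel_left, B.act_mul, B.act_hinv, χ.equivar]
  · -- second conjugation identity
    intro x y c b
    refine Prod.ext ?_ ?_ <;> dsimp only [mβ₁, mβ₂, mComp, mInv]
    · simp only [B.act_comp, B.act_δ, χ.mapG_id, B.G.inv_id, B.act_id,
        χ.mapG_inv, B.G.inv_inv, B.act_mul, B.act_hinv]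
    · rw [A.G.id_comp, A.G.inv_comp]
end

section
/- Let A ↪ι G̃ ↠π G be an extension of groupoids with A an abelian G-module (contained as the kernel of π). Then the semidirect product A ⋊ G (for the conjugation action of G on A) is isomorphic as a groupoid to the diamond product G̃ ◇ G̃ = {(m,n) ∈ G̃ × G̃ : π(m) = π(n)}/∼, where (ι(a)m, ι(a)n) ∼ (m,n) for a ∈ A. -/
section ExtensionDiamond

variable {X : Type} (Gt G : GpdOver X) (π : GpdHom Gt G)
  (A : X → Type) (ι : ∀ {x : X}, A x → Gt.Hom x x)

/-- Pairs `(m, n) ∈ G̃ × G̃` with `π(m) = π(n)`. -/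
def EPair (x y : X) : Type :=
  {p : Gt.Hom x y × Gt.Hom x y // π.map p.1 = π.map p.2}

/-- The relation `(ι(a)·m, ι(a)·n) ∼ (m, n)` for `a ∈ A`. -/
def ERel (x y : X) (p q : EPair Gt G π x y) : Prop :=
  ∃ a : A y, p.1.1 = Gt.comp (ι a) q.1.1 ∧ p.1.2 = Gt.comp (ι a) q.1.2

/-- The arrows of the diamond product `G̃ ◇ G̃`. -/
def EHom (x y : X) : Type := Quot (ERel Gt G π A (fun {_} a => ι a) x y)

/-- The class of a pair in `G̃ ◇ G̃`. -/
def emk {x y : X} (p : EPair Gt G π x y) : EHom Gt G π A (fun {_} a => ι a) x y :=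
  Quot.mk _ p

end ExtensionDiamond


theorem gpd_inv_unique {X : Type} (M : GpdOver X) {x y : X} (m : M.Hom x y) (k : M.Hom y x)
    (h : M.comp k m = M.id x) : k = M.inv m := by
  calc k = M.comp k (M.id y) := (M.comp_id k).symm
    _ = M.comp k (M.comp m (M.inv m)) := by rw [M.comp_inv]
    _ = M.comp (M.comp k m) (M.inv m) := (M.comp_assoc k m (M.inv m)).symm
    _ = M.inv m := by rw [h, M.id_comp]

theorem gpd_inv_inv {X : Type} (M : GpdOver X) {x y : X} (g : M.Hom x y) :
    M.inv (M.inv g) = g :=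
  (gpd_inv_unique M (M.inv g) g (M.comp_inv g)).symm

theorem gpd_inv_comp_rev {X : Type} (M : GpdOver X) {x y z : X} (g : M.Hom y z)
    (h : M.Hom x y) : M.inv (M.comp g h) = M.comp (M.inv h) (M.inv g) := by
  refine (gpd_inv_unique M (M.comp g h) (M.comp (M.inv h) (M.inv g)) ?_).symm
  calc M.comp (M.comp (M.inv h) (M.inv g)) (M.comp g h)
      = M.comp (M.inv h) (M.comp (M.comp (M.inv g) g) h) := by
        rw [M.comp_assoc, ← M.comp_assoc (M.inv g) g h]
    _ = M.id x := by rw [M.inv_comp, M.id_comp, M.inv_comp]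

/-- Let `A ↪ι G̃ ↠π G` be an extension of groupoids over
`X` with kernel the abelian `G`-module `A` (the conjugation action `act`
satisfying `ι(c_{π(m̃)}(a)) = m̃⁻¹·ι(a)·m̃`).  Then the semidirect product
`A ⋊ G` (whose arrows `x → y` are pairs `(a, g)` with `a ∈ A^{t g}` and
product `(a,g)(b,f) = (a·c_{g⁻¹}(b), g·f)`) is isomorphic as a groupoid to
the diamond product `G̃ ◇ G̃ = {(m,n) : π(m) = π(n)}/∼`, where
`(ι(a)m, ι(a)n) ∼ (m,n)`, with its componentwise groupoid structure. -/
theorem extension_semidirect_iso_diamond {X : Type}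
    (Gt G : GpdOver X) (π : GpdHom Gt G)
    (A : X → Type)
    (mulA : ∀ {x : X}, A x → A x → A x) (oneA : ∀ x : X, A x)
    (invA : ∀ {x : X}, A x → A x)
    (mulA_assoc : ∀ {x : X} (a b c : A x), mulA (mulA a b) c = mulA a (mulA b c))
    (oneA_mul : ∀ {x : X} (a : A x), mulA (oneA x) a = a)
    (invA_mul : ∀ {x : X} (a : A x), mulA (invA a) a = oneA x)
    (habel : ∀ {x : X} (a b : A x), mulA a b = mulA b a)
    (ι : ∀ {x : X}, A x → Gt.Hom x x)
    (hι_mul : ∀ {x : X} (a b : A x), ι (mulA a b) = Gt.comp (ι a) (ι b))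
    (hι_inj : ∀ {x : X} (a b : A x), ι a = ι b → a = b)
    (hπ_surj : ∀ {x y : X} (g : G.Hom x y), ∃ m : Gt.Hom x y, π.map m = g)
    (hker : ∀ {x : X} (m : Gt.Hom x x), π.map m = G.id x ↔ ∃ a : A x, ι a = m)
    (act : ∀ {x y : X}, G.Hom x y → A y → A x)
    (hact : ∀ {x y : X} (m : Gt.Hom x y) (a : A y),
      ι (act (π.map m) a) = Gt.comp (Gt.inv m) (Gt.comp (ι a) m)) :
    ∃ (dcomp : ∀ {x y z : X},
          EHom Gt G π A (fun {_} a => ι a) y z →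
          EHom Gt G π A (fun {_} a => ι a) x y →
          EHom Gt G π A (fun {_} a => ι a) x z)
      (Φ : ∀ {x y : X}, A y × G.Hom x y → EHom Gt G π A (fun {_} a => ι a) x y),
      -- the componentwise composition of the diamond product is well defined
      (∀ {x y z : X} (p : EPair Gt G π y z) (q : EPair Gt G π x y),
          dcomp (emk Gt G π A (fun {_} a => ι a) p)
              (emk Gt G π A (fun {_} a => ι a) q)
            = emk Gt G π A (fun {_} a => ι a)
                ⟨(Gt.comp p.1.1 q.1.1, Gt.comp p.1.2 q.1.2), by
                  rw [π.map_comp, π.map_comp, p.2, q.2]⟩) ∧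
      -- Φ is an isomorphism of groupoids from `A ⋊ G` to `G̃ ◇ G̃`
      (∀ x y : X, Function.Bijective
          (fun c : A y × G.Hom x y => Φ c)) ∧
      (∀ {x y z : X} (c : A z × G.Hom y z) (d : A y × G.Hom x y),
          Φ ((mulA c.1 (act (G.inv c.2) d.1), G.comp c.2 d.2) : A z × G.Hom x z)
            = dcomp (Φ c) (Φ d)) := by
  classical
  have π_ι : ∀ {x : X} (a : A x), π.map (ι a) = G.id x := fun {x} a => (hker (ι a)).mpr ⟨a, rfl⟩
  have ι_one : ∀ x : X, ι (oneA x) = Gt.id x := by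
    intro x
    have h : Gt.comp (ι (oneA x)) (ι (oneA x)) = ι (oneA x) := by
      rw [← hι_mul, oneA_mul]
    have h2 := congrArg (fun w => Gt.comp w (Gt.inv (ι (oneA x)))) h
    simpa [Gt.comp_assoc, Gt.comp_inv, Gt.comp_id] using h2
  have ι_inv : ∀ {x : X} (a : A x), Gt.inv (ι a) = ι (invA a) := by
    intro x a
    refine (gpd_inv_unique Gt (ι a) (ι (invA a)) ?_).symm
    rw [← hι_mul, invA_mul, ι_one]
  have comm_ι : ∀ {x : X} (a b : A x), Gt.comp (ι a) (ι b) = Gt.comp (ι b) (ι a) := by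
    intro x a b; rw [← hι_mul, ← hι_mul, habel]
  have mul_invA : ∀ {x : X} (a : A x), mulA a (invA a) = oneA x := by
    intro x a; rw [habel, invA_mul]
  have sand : ∀ {x : X} (a c : A x),
      Gt.comp (ι a) (Gt.comp (ι c) (Gt.inv (ι a))) = ι c := by
    intro x a c
    rw [ι_inv, ← hι_mul, ← hι_mul]
    congr 1
    rw [habel c (invA a), ← mulA_assoc, mul_invA, oneA_mul]
  have conj : ∀ {x y : X} (m : Gt.Hom x y) (b : A x),
      Gt.comp m (Gt.comp (ι b) (Gt.inv m)) = ι (act (G.inv (π.map m)) b) := by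
    intro x y m b
    have h := hact (Gt.inv m) b
    rw [π.map_inv, gpd_inv_inv] at h
    exact h.symm
  have key : ∀ {x y : X} (m : Gt.Hom x y) (b : A x),
      Gt.comp m (ι b) = Gt.comp (ι (act (G.inv (π.map m)) b)) m := by
    intro x y m b
    rw [← conj m b]
    simp only [Gt.comp_assoc, Gt.inv_comp, Gt.comp_id]
  let lift : ∀ {x y : X}, G.Hom x y → Gt.Hom x y :=
    fun {x y} g => Classical.choose (hπ_surj g)
  have lift_spec : ∀ {x y : X} (g : G.Hom x y), π.map (lift g) = g :=
    fun {x y} g => Classical.choose_spec (hπ_surj g)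
  have kerA : ∀ {x y : X} (p : EPair Gt G π x y),
      π.map (Gt.comp p.1.1 (Gt.inv p.1.2)) = G.id y := by
    intro x y p
    rw [π.map_comp, π.map_inv, p.2, G.comp_inv]
  let κ : ∀ {x y : X}, EPair Gt G π x y → A y :=
    fun {x y} p => Classical.choose ((hker _).mp (kerA p))
  have κ_spec : ∀ {x y : X} (p : EPair Gt G π x y),
      ι (κ p) = Gt.comp p.1.1 (Gt.inv p.1.2) :=
    fun {x y} p => Classical.choose_spec ((hker _).mp (kerA p))
  have κ_eq : ∀ {x y : X} (p : EPair Gt G π x y),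
      p.1.1 = Gt.comp (ι (κ p)) p.1.2 := by
    intro x y p
    rw [κ_spec, Gt.comp_assoc, Gt.inv_comp, Gt.comp_id]
  have κ_compute : ∀ {x y : X} (p : EPair Gt G π x y) (a : A y),
      p.1.1 = Gt.comp (ι a) p.1.2 → κ p = a := by
    intro x y p a h
    apply hι_inj
    rw [κ_spec, h, Gt.comp_assoc, Gt.comp_inv, Gt.comp_id]
  have ψ_inv : ∀ {x y : X} (p q : EPair Gt G π x y),
      ERel Gt G π A (fun {_} a => ι a) x y p q →
      ((κ p, π.map p.1.2) : A y × G.Hom x y) = (κ q, π.map q.1.2) := by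
    intro x y p q hrel
    obtain ⟨a, h1, h2⟩ := hrel
    have hπ2 : π.map p.1.2 = π.map q.1.2 := by
      rw [h2, π.map_comp, π_ι, G.id_comp]
    have hκ : κ p = κ q := by
      apply hι_inj
      rw [κ_spec p, h1, h2, gpd_inv_comp_rev]
      calc Gt.comp (Gt.comp (ι a) q.1.1) (Gt.comp (Gt.inv q.1.2) (Gt.inv (ι a)))
          = Gt.comp (ι a) (Gt.comp (Gt.comp q.1.1 (Gt.inv q.1.2)) (Gt.inv (ι a))) := by
            simp only [Gt.comp_assoc]
        _ = Gt.comp (ι a) (Gt.comp (ι (κ q)) (Gt.inv (ι a))) := by rw [← κ_spec]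
        _ = ι (κ q) := sand a (κ q)
    rw [hκ, hπ2]
  have compPf : ∀ {x y z : X} (p : EPair Gt G π y z) (q : EPair Gt G π x y),
      π.map (Gt.comp p.1.1 q.1.1) = π.map (Gt.comp p.1.2 q.1.2) := by
    intro x y z p q; rw [π.map_comp, π.map_comp, p.2, q.2]
  let f : ∀ {x y z : X}, EPair Gt G π y z → EPair Gt G π x y →
      EHom Gt G π A (fun {_} a => ι a) x z :=
    fun {x y z} p q => emk Gt G π A (fun {_} a => ι a)
      ⟨(Gt.comp p.1.1 q.1.1, Gt.comp p.1.2 q.1.2), compPf p q⟩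
  have f_right : ∀ {x y z : X} (p : EPair Gt G π y z) (q q' : EPair Gt G π x y),
      ERel Gt G π A (fun {_} a => ι a) x y q q' → f p q = f p q' := by
    intro x y z p q q' hrel
    obtain ⟨a, h1, h2⟩ := hrel
    apply Quot.sound
    refine ⟨act (G.inv (π.map p.1.2)) a, ?_, ?_⟩
    · show Gt.comp p.1.1 q.1.1
          = Gt.comp (ι (act (G.inv (π.map p.1.2)) a)) (Gt.comp p.1.1 q'.1.1)
      rw [h1, ← Gt.comp_assoc, key p.1.1 a, Gt.comp_assoc, p.2]
    · show Gt.comp p.1.2 q.1.2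
          = Gt.comp (ι (act (G.inv (π.map p.1.2)) a)) (Gt.comp p.1.2 q'.1.2)
      rw [h2, ← Gt.comp_assoc, key p.1.2 a, Gt.comp_assoc]
  have f_left : ∀ {x y z : X} (p p' : EPair Gt G π y z) (q : EPair Gt G π x y),
      ERel Gt G π A (fun {_} a => ι a) y z p p' → f p q = f p' q := by
    intro x y z p p' q hrel
    obtain ⟨a, h1, h2⟩ := hrel
    apply Quot.sound
    refine ⟨a, ?_, ?_⟩
    · show Gt.comp p.1.1 q.1.1 = Gt.comp (ι a) (Gt.comp p'.1.1 q.1.1)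
      rw [h1, Gt.comp_assoc]
    · show Gt.comp p.1.2 q.1.2 = Gt.comp (ι a) (Gt.comp p'.1.2 q.1.2)
      rw [h2, Gt.comp_assoc]
  let dcomp : ∀ {x y z : X},
      EHom Gt G π A (fun {_} a => ι a) y z →
      EHom Gt G π A (fun {_} a => ι a) x y →
      EHom Gt G π A (fun {_} a => ι a) x z :=
    fun {x y z} dp dq =>
      Quot.lift₂ f (fun p q q' h => f_right p q q' h) (fun p p' q h => f_left p p' q h) dp dq
  let Φ : ∀ {x y : X}, A y × G.Hom x y → EHom Gt G π A (fun {_} a => ι a) x y :=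
    fun {x y} c => emk Gt G π A (fun {_} a => ι a)
      ⟨(Gt.comp (ι c.1) (lift c.2), lift c.2), by rw [π.map_comp, π_ι, G.id_comp]⟩
  let Ψ : ∀ {x y : X}, EHom Gt G π A (fun {_} a => ι a) x y → A y × G.Hom x y :=
    fun {x y} e => Quot.lift (fun p => (κ p, π.map p.1.2)) (fun p q h => ψ_inv p q h) e
  have ΨΦ : ∀ {x y : X} (c : A y × G.Hom x y), Ψ (Φ c) = c := by
    intro x y c
    exact Prod.ext (κ_compute _ c.1 rfl) (lift_spec c.2)
  have ΦΨ : ∀ {x y : X} (e : EHom Gt G π A (fun {_} a => ι a) x y), Φ (Ψ e) = e := by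
    intro x y e
    induction e using Quot.ind with
    | _ p =>
      have hL : π.map (Gt.comp p.1.2 (Gt.inv (lift (π.map p.1.2)))) = G.id y := by
        rw [π.map_comp, π.map_inv, lift_spec, G.comp_inv]
      obtain ⟨c, hc⟩ := (hker _).mp hL
      have hn : p.1.2 = Gt.comp (ι c) (lift (π.map p.1.2)) := by
        rw [hc, Gt.comp_assoc, Gt.inv_comp, Gt.comp_id]
      have h11 : p.1.1 = Gt.comp (ι c) (Gt.comp (ι (κ p)) (lift (π.map p.1.2))) := by
        rw [← Gt.comp_assoc, comm_ι, Gt.comp_assoc, ← hn, ← κ_eq]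
      exact (Quot.sound ⟨c, h11, hn⟩).symm
  refine ⟨dcomp, Φ, ?_, ?_, ?_⟩
  · intro x y z p q
    rfl
  · intro x y
    constructor
    · intro c c' h
      have h2 := congrArg (fun e => Ψ e) h
      simpa [ΨΦ] using h2
    · intro e
      exact ⟨Ψ e, ΦΨ e⟩
  · intro x y z c d
    have hP : Gt.comp (Gt.comp (ι c.1) (lift c.2)) (Gt.comp (ι d.1) (lift d.2))
        = Gt.comp (ι (mulA c.1 (act (G.inv c.2) d.1))) (Gt.comp (lift c.2) (lift d.2)) := by
      rw [hι_mul, Gt.comp_assoc, Gt.comp_assoc]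
      congr 1
      rw [← Gt.comp_assoc, key, lift_spec, Gt.comp_assoc]
    have hcompute : Ψ (dcomp (Φ c) (Φ d))
        = (mulA c.1 (act (G.inv c.2) d.1), G.comp c.2 d.2) := by
      refine Prod.ext ?_ ?_
      · exact κ_compute _ _ hP
      · show π.map (Gt.comp (lift c.2) (lift d.2)) = G.comp c.2 d.2
        rw [π.map_comp, lift_spec, lift_spec]
    rw [← hcompute]
    exact ΦΨ (dcomp (Φ c) (Φ d))
end

section
/- Let M and N be groupoids and Z a Morita equivalence (bibundle) between them with anchor maps φ: Z → M⁰, ψ: Z → N⁰, left M-action and right N-action, with the right N-action free and principal over φ. For (z, z') with φ(z) = φ(z'), let g^Z(z,z') be the unique arrow of N with z' = z · g^Z(z,z'). Then the map Φ^Z: M[Z] → N[Z] sending (z, m, z') to (z, g^Z(z, m·z'), z') is an isomorphism of groupoids over Z, where M[Z] and N[Z] denote the pullback groupoids of M and N along φ and ψ respectively. -/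
/-- A bibundle (generalized morphism) from a groupoid `M` over `OM` to a
groupoid `N` over `ON`: a space `Z` with moment maps `φ : Z → OM`,
`ψ : Z → ON` (encoded by the doubly-indexed family of fibers `Z x u`), a
left `M`-action along `φ` and a right `N`-action along `ψ`, which commute.
For `m : M.Hom x y` (source `x`, target `y`), `m·z` is defined when
`φ z = x` and lands over `y`; for `n : N.Hom v u`, `z·n` is defined when
`ψ z = u` and lands over `v`. -/
structure Bibundle {OM ON : Type} (M : GpdOver OM) (N : GpdOver ON) where
  Z : OM → ON → Type
  actL : ∀ {x y : OM} {u : ON}, M.Hom x y → Z x u → Z y u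
  actR : ∀ {x : OM} {u v : ON}, Z x u → N.Hom v u → Z x v
  actL_id : ∀ {x : OM} {u : ON} (z : Z x u), actL (M.id x) z = z
  actL_comp : ∀ {x y w : OM} {u : ON} (m : M.Hom y w) (m' : M.Hom x y)
    (z : Z x u), actL (M.comp m m') z = actL m (actL m' z)
  actR_id : ∀ {x : OM} {u : ON} (z : Z x u), actR z (N.id u) = z
  actR_comp : ∀ {x : OM} {u v w : ON} (z : Z x u) (n : N.Hom v u)
    (n' : N.Hom w v), actR (actR z n) n' = actR z (N.comp n n')
  compat : ∀ {x y : OM} {u v : ON} (m : M.Hom x y) (z : Z x u)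
    (n : N.Hom v u), actL m (actR z n) = actR (actL m z) n

/-- A Morita equivalence bibundle: both moment maps are surjective and both
actions are principal (free and transitive on the fibers of the other
moment map). -/
structure MoritaBibundle {OM ON : Type} (M : GpdOver OM) (N : GpdOver ON)
    extends Bibundle M N where
  surjL : ∀ x : OM, ∃ u : ON, Nonempty (Z x u)
  surjR : ∀ u : ON, ∃ x : OM, Nonempty (Z x u)
  prinR : ∀ {x : OM} {u u' : ON} (z : Z x u) (z' : Z x u'),
    ∃! n : N.Hom u' u, actR z n = z'
  prinL : ∀ {x x' : OM} {u : ON} (z : Z x u) (z' : Z x' u),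
    ∃! m : M.Hom x x', actL m z = z'

/-- Let `Z` be a Morita equivalence bibundle between
groupoids `M` and `N`, with moment maps `φ, ψ`.  For `(z, z')` with
`φ z = φ z'` let `g^Z(z, z')` be the unique arrow of `N` with
`z' = z · g^Z(z,z')` (its existence and uniqueness is the right
principality).  Then the map `Φ^Z : M[Z] → N[Z]` sending `(z, m, z')` to
`(z, g^Z(z, m·z'), z')` — here characterized by the equivariance property
`z₂ · Φ(m) = m · z₁` — is an isomorphism of groupoids over `Z`: it
preserves composition and identities, and it is bijective on each hom-set
of the pullback groupoids. -/
theorem morita_bibundle_pullback_iso {OM ON : Type}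
    (M : GpdOver OM) (N : GpdOver ON) (W : MoritaBibundle M N)
    (Φ : ∀ (z₁ z₂ : Σ (x : OM) (u : ON), W.Z x u),
      M.Hom z₁.1 z₂.1 → N.Hom z₁.2.1 z₂.2.1)
    (hΦ : ∀ (z₁ z₂ : Σ (x : OM) (u : ON), W.Z x u) (m : M.Hom z₁.1 z₂.1),
      W.actR z₂.2.2 (Φ z₁ z₂ m) = W.actL m z₁.2.2) :
    (∀ (z₁ z₂ z₃ : Σ (x : OM) (u : ON), W.Z x u)
        (m : M.Hom z₂.1 z₃.1) (m' : M.Hom z₁.1 z₂.1),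
        Φ z₁ z₃ (M.comp m m') = N.comp (Φ z₂ z₃ m) (Φ z₁ z₂ m')) ∧
    (∀ z : Σ (x : OM) (u : ON), W.Z x u, Φ z z (M.id z.1) = N.id z.2.1) ∧
    (∀ z₁ z₂ : Σ (x : OM) (u : ON), W.Z x u,
        Function.Bijective (Φ z₁ z₂)) := by
  have free : ∀ (z₁ z₂ : Σ (x : OM) (u : ON), W.Z x u)
      (n n' : N.Hom z₁.2.1 z₂.2.1),
      W.actR z₂.2.2 n = W.actR z₂.2.2 n' → n = n' := by
    intro z₁ z₂ n n' h
    obtain ⟨n₀, -, hu⟩ := W.prinR z₂.2.2 (W.actR z₂.2.2 n)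
    exact (hu n rfl).trans (hu n' h.symm).symm
  refine ⟨?_, ?_, ?_⟩
  · intro z₁ z₂ z₃ m m'
    apply free z₁ z₃
    rw [hΦ, ← W.actR_comp, hΦ, ← W.compat, hΦ, ← W.actL_comp]
  · intro z
    apply free z z
    rw [hΦ, W.actL_id, W.actR_id]
  · intro z₁ z₂
    constructor
    · intro m m' h
      obtain ⟨m₀, -, hu⟩ := W.prinL z₁.2.2 (W.actL m z₁.2.2)
      refine (hu m rfl).trans (hu m' ?_).symm
      show W.actL m' z₁.2.2 = W.actL m z₁.2.2
      rw [← hΦ, ← h, hΦ]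
    · intro n
      obtain ⟨m, hm, -⟩ := W.prinL z₁.2.2 (W.actR z₂.2.2 n)
      refine ⟨m, free z₁ z₂ _ _ ?_⟩
      rw [hΦ, hm]
end

section
/- Let M and N be groupoids and P an exchanger-style Morita equivalence bibundle from M to N (left principal M-action over ψ: P → N⁰, right principal N-action over φ: P → M⁰). Let P̄ denote P with the reversed actions n · p̄ := p·n⁻¹ and p̄ · m := m⁻¹·p. Then the map P ×_{N⁰} P̄ → M, induced by (p, q̄) ↦ the unique m with p = m·q, descends to a bijection (P •_N P̄) ≅ M compatible with the M-M bibundle structures, where P •_N P̄ is the quotient of {(p,q) : ψ(p) = ψ(q)} by the diagonal N-action [p·n, q·n] = [p,q]. Similarly P̄ •_M P ≅ N. -/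
section CompBib

variable {OM ON : Type} {M : GpdOver OM} {N : GpdOver ON} (W : MoritaBibundle M N)

/-- The fiber over `(x, y)` of the composite bibundle `P •_N P̄` (where `P̄`
is `P` with the reversed actions): the quotient of
`{(u, p, q) : p ∈ Z x u, q ∈ Z y u}` by the diagonal `N`-action
`[p·n, q·n] = [p, q]`. -/
def CompMM (x y : OM) : Type :=
  Quot (fun p q : Σ u : ON, W.Z x u × W.Z y u =>
    ∃ n : N.Hom p.1 q.1, p.2.1 = W.actR q.2.1 n ∧ p.2.2 = W.actR q.2.2 n)

/-- The fiber over `(u, v)` of the composite bibundle `P̄ •_M P`: the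
quotient of `{(x, p, q) : p ∈ Z x u, q ∈ Z x v}` by the diagonal
`M`-action. -/
def CompNN (u v : ON) : Type :=
  Quot (fun p q : Σ x : OM, W.Z x u × W.Z x v =>
    ∃ m : M.Hom q.1 p.1, p.2.1 = W.actL m q.2.1 ∧ p.2.2 = W.actL m q.2.2)

end CompBib

/-- Let `P` be a Morita equivalence bibundle from `M` to
`N` and `P̄` the same space with the reversed actions (`n·p̄ = p·n⁻¹`,
`p̄·m = m⁻¹·p`).  Then the map induced by `(p, q̄) ↦` (the unique `m` with
`p = m·q`) descends to a bijection `P •_N P̄ ≅ M`, compatibly with the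
`M`-`M`-bibundle structures; and similarly `(p̄, q) ↦` (the unique `n` with
`q = p·n`) descends to a bijection `P̄ •_M P ≅ N`. -/
theorem morita_bibundle_cancellation {OM ON : Type}
    (M : GpdOver OM) (N : GpdOver ON) (W : MoritaBibundle M N) :
    (∃ Θ : ∀ {x y : OM}, CompMM W x y → M.Hom y x,
      -- defining property: Θ [p, q] is the unique `m` with `m·q = p`
      (∀ {x y : OM} (u : ON) (p : W.Z x u) (q : W.Z y u) (m : M.Hom y x),
          W.actL m q = p → Θ (Quot.mk _ ⟨u, p, q⟩) = m) ∧
      (∀ x y : OM, Function.Bijective fun c : CompMM W x y => Θ c) ∧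
      -- compatibility with the left `M`-action on `P •_N P̄`
      (∀ {x x' y : OM} (u : ON) (p : W.Z x u) (q : W.Z y u) (m : M.Hom x x'),
          Θ (Quot.mk _ ⟨u, W.actL m p, q⟩)
            = M.comp m (Θ (Quot.mk _ ⟨u, p, q⟩))) ∧
      -- compatibility with the right `M`-action on `P •_N P̄` (through `P̄`)
      (∀ {x y y' : OM} (u : ON) (p : W.Z x u) (q : W.Z y u) (m : M.Hom y' y),
          Θ (Quot.mk _ ⟨u, p, W.actL (M.inv m) q⟩)
            = M.comp (Θ (Quot.mk _ ⟨u, p, q⟩)) m)) ∧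
    (∃ Θ' : ∀ {u v : ON}, CompNN W u v → N.Hom v u,
      (∀ {u v : ON} (x : OM) (p : W.Z x u) (q : W.Z x v) (n : N.Hom v u),
          W.actR p n = q → Θ' (Quot.mk _ ⟨x, p, q⟩) = n) ∧
      (∀ u v : ON, Function.Bijective fun c : CompNN W u v => Θ' c)) := by
  constructor
  · -- first part: Θ : P •_N P̄ ≅ M
    have hwd : ∀ {x y : OM} (p q : Σ u : ON, W.Z x u × W.Z y u),
        (∃ n : N.Hom p.1 q.1, p.2.1 = W.actR q.2.1 n ∧ p.2.2 = W.actR q.2.2 n) →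
        (W.prinL p.2.2 p.2.1).choose = (W.prinL q.2.2 q.2.1).choose := by
      rintro x y p q ⟨n, h1, h2⟩
      refine (W.prinL p.2.2 p.2.1).unique (W.prinL p.2.2 p.2.1).choose_spec.1 ?_
      have hm := (W.prinL q.2.2 q.2.1).choose_spec.1
      rw [h1, h2, W.compat, hm]
    refine ⟨fun {x y} c => Quot.lift (fun p => (W.prinL p.2.2 p.2.1).choose)
      (fun p q h => hwd p q h) c, ?_, ?_, ?_, ?_⟩
    · intro x y u p q m hm
      exact (W.prinL q p).unique (W.prinL q p).choose_spec.1 hm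
    · intro x y
      constructor
      · rintro ⟨⟨u, p, q⟩⟩ ⟨⟨u', p', q'⟩⟩ h
        simp only at h
        set m := (W.prinL q p).choose with hm
        have h1 : W.actL m q = p := (W.prinL q p).choose_spec.1
        have h2 : W.actL m q' = p' := by
          rw [h]; exact (W.prinL q' p').choose_spec.1
        obtain ⟨n, hn, -⟩ := W.prinR q' q
        apply Quot.sound
        refine ⟨n, ?_, hn.symm⟩
        rw [← h1, ← h2, ← hn, W.compat]
      · intro m
        obtain ⟨u, ⟨q⟩⟩ := W.surjL y
        refine ⟨Quot.mk _ ⟨u, W.actL m q, q⟩, ?_⟩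
        exact (W.prinL q (W.actL m q)).unique (W.prinL q (W.actL m q)).choose_spec.1 rfl
    · intro x x' y u p q m
      have h1 : W.actL (W.prinL q p).choose q = p := (W.prinL q p).choose_spec.1
      refine (W.prinL q (W.actL m p)).unique
        (W.prinL q (W.actL m p)).choose_spec.1 ?_
      rw [W.actL_comp, h1]
    · intro x y y' u p q m
      have h1 : W.actL (W.prinL q p).choose q = p := (W.prinL q p).choose_spec.1
      refine (W.prinL (W.actL (M.inv m) q) p).unique
        (W.prinL (W.actL (M.inv m) q) p).choose_spec.1 ?_
      rw [← W.actL_comp, M.comp_assoc, M.comp_inv, M.comp_id, h1]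
  · -- second part: Θ' : P̄ •_M P ≅ N
    have hwd : ∀ {u v : ON} (p q : Σ x : OM, W.Z x u × W.Z x v),
        (∃ m : M.Hom q.1 p.1, p.2.1 = W.actL m q.2.1 ∧ p.2.2 = W.actL m q.2.2) →
        (W.prinR p.2.1 p.2.2).choose = (W.prinR q.2.1 q.2.2).choose := by
      rintro u v p q ⟨m, h1, h2⟩
      refine (W.prinR p.2.1 p.2.2).unique (W.prinR p.2.1 p.2.2).choose_spec.1 ?_
      have hn := (W.prinR q.2.1 q.2.2).choose_spec.1
      rw [h1, h2, ← W.compat, hn]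
    refine ⟨fun {u v} c => Quot.lift (fun p => (W.prinR p.2.1 p.2.2).choose)
      (fun p q h => hwd p q h) c, ?_, ?_⟩
    · intro u v x p q n hn
      exact ((W.prinR p q).unique (W.prinR p q).choose_spec.1 hn)
    · intro u v
      constructor
      · rintro ⟨⟨x, p, q⟩⟩ ⟨⟨x', p', q'⟩⟩ h
        simp only at h
        set n := (W.prinR p q).choose with hn
        have h1 : W.actR p n = q := (W.prinR p q).choose_spec.1
        have h2 : W.actR p' n = q' := by
          exact h ▸ (W.prinR p' q').choose_spec.1
        obtain ⟨m, hm, -⟩ := W.prinL p' p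
        apply Quot.sound
        refine ⟨m, hm.symm, ?_⟩
        rw [← h1, ← h2, ← hm, W.compat]
      · intro n
        obtain ⟨x, ⟨p⟩⟩ := W.surjR u
        refine ⟨Quot.mk _ ⟨x, p, W.actR p n⟩, ?_⟩
        exact (W.prinR p (W.actR p n)).unique (W.prinR p (W.actR p n)).choose_spec.1 rfl
end

section
/- Let 𝔊₁, 𝔊₂ be crossed modules of groupoids with common object space X and M a crossing from 𝔊₁ to 𝔊₂ (data α₁,α₂,β₁,β₂). Form the bundle of groups H₁ ×_X H₂ = {(h₁,h₂) : s(h₁) = s(h₂)} with the M-action (h₁,h₂)^m = (c₁(α₂(m))(h₁), c₂(β₂(m))(h₂)) and the morphism α₁·β₁: (h₁,h₂) ↦ α₁(h₁)β₁(h₂). Then (M, H₁ ×_X H₂, α₁·β₁, this action) is a crossed module of groupoids, and the pairs (pr₁, α₂): 𝔊' → 𝔊₁ and (pr₂, β₂): 𝔊' → 𝔊₂ are strict morphisms of crossed modules, where 𝔊' denotes this crossed module. -/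
section CrossingXMod

variable {X : Type}

/-- The fiber of the bundle `H₁ ×_X H₂` at `x`. -/
def PH (A B : XMod X) (x : X) : Type := A.H x × B.H x

/-- Componentwise multiplication on `H₁ ×_X H₂`. -/
def pMul (A B : XMod X) {x : X} (p q : PH A B x) : PH A B x := (A.mul p.1 q.1, B.mul p.2 q.2)

/-- Componentwise inversion on `H₁ ×_X H₂`. -/
def pInv (A B : XMod X) {x : X} (p : PH A B x) : PH A B x := (A.hinv p.1, B.hinv p.2)

/-- The morphism `α₁·β₁ : H₁ ×_X H₂ → M`, `(h₁, h₂) ↦ α₁(h₁)·β₁(h₂)`. -/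
def pδ {A B : XMod X} (C : Crossing A B) {x : X} (p : PH A B x) : C.M.Hom x x :=
  C.M.comp (C.α₁ p.1) (C.β₁ p.2)

/-- The action of `M` on `H₁ ×_X H₂`:
`(h₁, h₂)^m = (c₁(α₂ m)(h₁), c₂(β₂ m)(h₂))`. -/
def pAct {A B : XMod X} (C : Crossing A B) {x y : X} (m : C.M.Hom x y) (p : PH A B y) : PH A B x :=
  (A.act (C.α₂.map m) p.1, B.act (C.β₂.map m) p.2)

end CrossingXMod


/-!
Every axiom holds componentwise except for one interaction: the images of `α₁` and `β₁` commute
in `M`, because conjugating `β₁ b` by `α₁ a` acts on `b` through `β₂ (α₁ a) = 1`. This makes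
`α₁·β₁` multiplicative; and since `α₂ (α₁ a · β₁ b) = ∂₁ a` and `β₂ (α₁ a · β₁ b) = ∂₂ b`, the
Peiffer identity reduces to those of `𝔊₁` and `𝔊₂`.
-/

namespace GpdOver

variable {X : Type} (G : GpdOver X)

lemma comp_comp_comp_comm {x : X} (a b c d : G.Hom x x) (hbc : G.comp b c = G.comp c b) :
    G.comp (G.comp a b) (G.comp c d) = G.comp (G.comp a c) (G.comp b d) := by
  rw [G.comp_assoc, ← G.comp_assoc b, hbc, G.comp_assoc, ← G.comp_assoc]

lemma conj_comp_conj {x y : X} (m : G.Hom x y) (a b : G.Hom y y) :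
    G.comp (G.comp (G.inv m) (G.comp a m)) (G.comp (G.inv m) (G.comp b m)) =
      G.comp (G.inv m) (G.comp (G.comp a b) m) := by
  simp only [G.comp_assoc]
  rw [← G.comp_assoc m, G.comp_inv, G.id_comp]

end GpdOver

namespace Crossing

variable {X : Type} {A B : XMod X} (C : Crossing A B)

lemma α₁_comp_β₁_comm {x : X} (a : A.H x) (b : B.H x) :
    C.M.comp (C.α₁ a) (C.β₁ b) = C.M.comp (C.β₁ b) (C.α₁ a) := by
  have h := C.conj₂ (C.α₁ a) b
  rw [C.diag₁, B.act_id] at h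
  nth_rw 1 [h]
  rw [← C.M.comp_assoc, C.M.comp_inv, C.M.id_comp]

lemma α₂_map_pδ {x : X} (p : PH A B x) : C.α₂.map (pδ C p) = A.δ p.1 := by
  rw [pδ, C.α₂.map_comp, C.tri₁, C.diag₂, A.G.comp_id]

lemma β₂_map_pδ {x : X} (p : PH A B x) : C.β₂.map (pδ C p) = B.δ p.2 := by
  rw [pδ, C.β₂.map_comp, C.tri₂, C.diag₁, B.G.id_comp]

lemma pδ_pMul {x : X} (p q : PH A B x) :
    pδ C (pMul A B p q) = C.M.comp (pδ C p) (pδ C q) := by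
  rw [pδ, pMul, C.α₁_mul, C.β₁_mul, C.M.comp_comp_comp_comm _ _ _ _ (C.α₁_comp_β₁_comm _ _)]
  rfl

lemma pAct_id {x : X} (p : PH A B x) : pAct C (C.M.id x) p = p := by
  rw [pAct, C.α₂.map_id, C.β₂.map_id, A.act_id, B.act_id]
  rfl

lemma pAct_comp {x y z : X} (m : C.M.Hom y z) (n : C.M.Hom x y) (p : PH A B z) :
    pAct C (C.M.comp m n) p = pAct C n (pAct C m p) := by
  rw [pAct, C.α₂.map_comp, C.β₂.map_comp, A.act_comp, B.act_comp]
  rfl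

lemma pAct_pMul {x y : X} (m : C.M.Hom x y) (p q : PH A B y) :
    pAct C m (pMul A B p q) = pMul A B (pAct C m p) (pAct C m q) := by
  rw [pAct, pMul, A.act_mul, B.act_mul]
  rfl

lemma pδ_pAct {x y : X} (m : C.M.Hom x y) (p : PH A B y) :
    pδ C (pAct C m p) = C.M.comp (C.M.inv m) (C.M.comp (pδ C p) m) := by
  rw [pδ, pAct, C.conj₁, C.conj₂, C.M.conj_comp_conj]
  rfl

lemma pAct_pδ {x : X} (p q : PH A B x) :
    pAct C (pδ C p) q = pMul A B (pInv A B p) (pMul A B q p) := by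
  rw [pAct, C.α₂_map_pδ, C.β₂_map_pδ, A.act_δ, B.act_δ]
  rfl

end Crossing

/-- Let `C = (M, α₁, α₂, β₁, β₂)` be a crossing from `𝔊₁`
to `𝔊₂` over `X`.  Then the bundle of groups `H₁ ×_X H₂` with the
`M`-action `(h₁,h₂)^m = (c₁(α₂ m)(h₁), c₂(β₂ m)(h₂))` and the morphism
`α₁·β₁ : (h₁,h₂) ↦ α₁(h₁)·β₁(h₂)` form a crossed module of groupoids
`𝔊' = (H₁ ×_X H₂ → M)`, and the pairs `(pr₁, α₂) : 𝔊' → 𝔊₁` and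
`(pr₂, β₂) : 𝔊' → 𝔊₂` are strict morphisms of crossed modules. -/
theorem crossing_induced_crossed_module {X : Type} (A B : XMod X)
    (C : Crossing A B) :
    -- `α₁·β₁` is a morphism of group bundles into the loops of `M`
    (∀ {x : X} (p q : PH A B x),
        pδ C (pMul A B p q) = C.M.comp (pδ C p) (pδ C q)) ∧
    -- `pAct` is a groupoid action by group automorphisms
    (∀ {x : X} (p : PH A B x), pAct C (C.M.id x) p = p) ∧
    (∀ {x y z : X} (m : C.M.Hom y z) (n : C.M.Hom x y) (p : PH A B z),
        pAct C (C.M.comp m n) p = pAct C n (pAct C m p)) ∧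
    (∀ {x y : X} (m : C.M.Hom x y) (p q : PH A B y),
        pAct C m (pMul A B p q) = pMul A B (pAct C m p) (pAct C m q)) ∧
    -- first crossed module identity
    (∀ {x y : X} (m : C.M.Hom x y) (p : PH A B y),
        pδ C (pAct C m p) = C.M.comp (C.M.inv m) (C.M.comp (pδ C p) m)) ∧
    -- second (Peiffer) identity
    (∀ {x : X} (p q : PH A B x),
        pAct C (pδ C p) q = pMul A B (pInv A B p) (pMul A B q p)) ∧
    -- `(pr₁, α₂)` is a strict morphism of crossed modules `𝔊' → 𝔊₁`
    (∀ {x : X} (p q : PH A B x),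
        (pMul A B p q).1 = A.mul p.1 q.1) ∧
    (∀ {x : X} (p : PH A B x), A.δ p.1 = C.α₂.map (pδ C p)) ∧
    (∀ {x y : X} (m : C.M.Hom x y) (p : PH A B y),
        (pAct C m p).1 = A.act (C.α₂.map m) p.1) ∧
    -- `(pr₂, β₂)` is a strict morphism of crossed modules `𝔊' → 𝔊₂`
    (∀ {x : X} (p q : PH A B x),
        (pMul A B p q).2 = B.mul p.2 q.2) ∧
    (∀ {x : X} (p : PH A B x), B.δ p.2 = C.β₂.map (pδ C p)) ∧
    (∀ {x y : X} (m : C.M.Hom x y) (p : PH A B y),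
        (pAct C m p).2 = B.act (C.β₂.map m) p.2) := by
  exact ⟨C.pδ_pMul, C.pAct_id, C.pAct_comp, C.pAct_pMul, C.pδ_pAct, C.pAct_pδ,
    fun _ _ => rfl, fun p => (C.α₂_map_pδ p).symm, fun _ _ => rfl,
    fun _ _ => rfl, fun p => (C.β₂_map_pδ p).symm, fun _ _ => rfl⟩
end
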